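/- Let l ≥ 2 be an integer, a, b, r ∈ ℝ, and let z ∈ ℂ satisfy z ≠ 2r²·cos(πn/(l+1)) for every n ∈ {1,…,l}. Define G_{11}(z) = (2/(l+1))·Σ_{n=1}^{l} sin²(πn/(l+1)) / (2r²·cos(πn/(l+1)) − z) and G_{1l}(z) = (2/(l+1))·Σ_{n=1}^{l} sin(πn/(l+1))·sin(πnl/(l+1)) / (2r²·cos(πn/(l+1)) − z). Then z is an eigenvalue of the matrix D_r^{a,b} (regarded as a complex matrix) if and only if 1 + (a + b + 2r)·G_{11}(z) + (a+r)(b+r)·(G_{11}(z)² − G_{1l}(z)²) = 0. -/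

import Mathlib

open Real Finset

/-- The discrete Dirichlet Laplacian on `{1,…,l}` (indices shifted to `Fin l`). -/
noncomputable def lapMat (l : ℕ) : Matrix (Fin l) (Fin l) ℝ :=
  fun x y => if (x : ℤ) = (y : ℤ) + 1 ∨ (y : ℤ) = (x : ℤ) + 1 then 1 else 0

/-- The matrix `D_r^{a,b} = r² Δ_l + (a+r) E_{1,1} + (b+r) E_{l,l}`. -/
noncomputable def Dmat (l : ℕ) (a b r : ℝ) : Matrix (Fin l) (Fin l) ℝ :=
  fun x y =>
    r^2 * lapMat l x y
    + (if (x : ℕ) = 0 ∧ (y : ℕ) = 0 then a + r else 0)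
    + (if (x : ℕ) = l - 1 ∧ (y : ℕ) = l - 1 then b + r else 0)

/-!
`D_r^{a,b} - z` is the rank-two perturbation `(r²Δ_l - z) + U C Uᵀ` of `r²Δ_l - z`, where the
columns of `U` are `e_1, e_l` and `C = diag(a + r, b + r)`. The sine vectors
`x ↦ sin (π n x / (l + 1))` diagonalise `Δ_l` with eigenvalues `2 cos (π n / (l + 1))` and are
orthogonal with squared norm `(l + 1) / 2`, which gives `(r²Δ_l - z)⁻¹` in spectral form; its
corner entries are `G₁₁ = G_ll` and `G₁l = G_l1`. By the Weinstein–Aronszajn identity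
`det (A + U V) = det A · det (1 + V A⁻¹ U)`, `z` is an eigenvalue iff
`det (1 + C [[G₁₁, G₁l], [G₁l, G₁₁]]) = 0`, and this determinant is the stated expression.
-/

open Matrix

theorem two_mul_sin_half_mul_sum_cos (l : ℕ) (x : ℝ) :
    2 * sin (x / 2) * ∑ n ∈ Icc 1 l, cos (n * x) = sin ((l + 1 / 2) * x) - sin (x / 2) := by
  induction l with
  | zero => simp [div_eq_inv_mul]
  | succ l ih =>
    rw [Finset.sum_Icc_succ_top (by omega), mul_add, ih, two_mul_sin_mul_cos,
      show x / 2 - (l + 1 : ℕ) * x = -((l + 1 / 2) * x) by push_cast; ring, sin_neg]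
    push_cast
    ring_nf

theorem sum_cos_pi_mul_int_div_succ (l : ℕ) (m : ℤ) (hm : m ≠ 0) (hml : |m| < 2 * (l + 1)) :
    ∑ n ∈ Icc 1 l, cos (π * n * m / (l + 1)) = -(1 + cos (m * π)) / 2 := by
  set x := π * m / (l + 1) with hx
  have hsin : sin (x / 2) ≠ 0 := by
    have ht : |(m : ℝ) / (2 * (l + 1))| < 1 := by
      rw [abs_div, abs_of_pos (show (0 : ℝ) < 2 * (l + 1) by positivity),
        div_lt_one (by positivity)]
      exact_mod_cast hml
    have hx2 : x / 2 = π * (m / (2 * (l + 1))) := by rw [hx]; field_simp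
    rw [abs_lt] at ht
    rw [Ne, sin_eq_zero_iff_of_lt_of_lt, hx2]
    · have : (m : ℝ) ≠ 0 := by exact_mod_cast hm
      positivity
    · rw [hx2]; nlinarith [pi_pos]
    · rw [hx2]; nlinarith [pi_pos]
  have hdir := two_mul_sin_half_mul_sum_cos l x
  rw [show ((l : ℝ) + 1 / 2) * x = m * π - x / 2 by rw [hx]; field_simp; ring, sin_sub,
    sin_int_mul_pi] at hdir
  have hsum : ∑ n ∈ Icc 1 l, cos (π * n * m / (l + 1)) = ∑ n ∈ Icc 1 l, cos (n * x) :=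
    Finset.sum_congr rfl fun n _ => by rw [hx]; ring_nf
  rw [hsum]
  apply mul_left_cancel₀ (mul_ne_zero two_ne_zero hsin)
  linear_combination hdir

theorem sum_sin_mul_sin_pi_div_succ (l j k : ℕ) (hj : j ∈ Icc 1 l) (hk : k ∈ Icc 1 l) :
    ∑ n ∈ Icc 1 l, sin (π * n * j / (l + 1)) * sin (π * n * k / (l + 1)) =
      if j = k then ((l : ℝ) + 1) / 2 else 0 := by
  rw [Finset.mem_Icc] at hj hk
  have hprod (n : ℕ) : sin (π * n * j / (l + 1)) * sin (π * n * k / (l + 1)) =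
      (cos (π * n * ((j - k : ℤ) : ℝ) / (l + 1)) -
        cos (π * n * ((j + k : ℤ) : ℝ) / (l + 1))) / 2 := by
    rw [show π * n * ((j - k : ℤ) : ℝ) / (l + 1) = π * n * j / (l + 1) - π * n * k / (l + 1) by
        push_cast; ring,
      show π * n * ((j + k : ℤ) : ℝ) / (l + 1) = π * n * j / (l + 1) + π * n * k / (l + 1) by
        push_cast; ring,
      ← two_mul_sin_mul_sin]
    ring
  rw [Finset.sum_congr rfl fun n _ => hprod n, ← Finset.sum_div, Finset.sum_sub_distrib,
    sum_cos_pi_mul_int_div_succ l (j + k) (by omega) (by rw [abs_lt]; omega)]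
  split_ifs with hjk
  · subst hjk
    simp only [sub_self, Int.cast_zero, mul_zero, zero_div, cos_zero, Finset.sum_const,
      Nat.card_Icc, add_tsub_cancel_right, nsmul_eq_mul, mul_one]
    rw [show ((j + j : ℤ) : ℝ) * π = (j : ℤ) * (2 * π) by push_cast; ring, cos_int_mul_two_pi]
    ring
  · -- `j - k` and `j + k` have the same parity
    rw [sum_cos_pi_mul_int_div_succ l (j - k) (by omega) (by rw [abs_lt]; omega),
      show ((j + k : ℤ) : ℝ) * π = ((j - k : ℤ) : ℝ) * π + (k : ℤ) * (2 * π) by push_cast; ring,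
      cos_add_int_mul_two_pi]
    ring

theorem sin_sq_reflect_pi_mul_div_succ (l n : ℕ) :
    sin (π * n * l / (l + 1)) ^ 2 = sin (π * n / (l + 1)) ^ 2 := by
  rw [show π * n * l / (l + 1) = n * π - π * n / (l + 1) by field_simp; ring, sin_nat_mul_pi_sub,
    neg_sq, mul_pow, ← pow_mul, mul_comm n, pow_mul, neg_one_sq, one_pow, one_mul]

theorem Matrix.mem_spectrum_iff_det_sub_smul_one_eq_zero {n K : Type*} [Fintype n]
    [DecidableEq n] [Field K] (A : Matrix n n K) (z : K) :
    z ∈ spectrum K A ↔ (A - z • 1).det = 0 := by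
  rw [spectrum.mem_iff, Algebra.algebraMap_eq_smul_one, ← neg_sub, IsUnit.neg_iff,
    isUnit_iff_isUnit_det, isUnit_iff_ne_zero, not_not]

theorem Matrix.one_submatrix_mul_mul_one_submatrix {m n R : Type*} [Fintype n] [DecidableEq n]
    [Semiring R] (e : m → n) (G : Matrix n n R) :
    (1 : Matrix n n R).submatrix e id * G * (1 : Matrix n n R).submatrix id e =
      G.submatrix e e := by
  ext i j
  simp [mul_apply, one_apply]

theorem lapMat_mulVec_shift (l : ℕ) (w : ℕ → ℝ) (h0 : w 0 = 0) (hlast : w (l + 1) = 0) :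
    lapMat l *ᵥ (fun y : Fin l => w ((y : ℕ) + 1)) =
      fun x : Fin l => w x + w ((x : ℕ) + 2) := by
  ext x
  have hsplit (y : ℕ) : (if (x : ℤ) = y + 1 ∨ (y : ℤ) = x + 1 then w (y + 1) else 0) =
      (if y + 1 = x then w x else 0) + (if y = x + 1 then w (x + 2) else 0) := by
    split_ifs <;> first | omega | simp_all
  simp only [mulVec, dotProduct, lapMat, ite_mul, one_mul, zero_mul]
  rw [Fin.sum_univ_eq_sum_range
      (fun y => if (x : ℤ) = y + 1 ∨ (y : ℤ) = x + 1 then w (y + 1) else 0),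
    Finset.sum_congr rfl fun y _ => hsplit y, Finset.sum_add_distrib, Finset.sum_ite_eq']
  obtain ⟨x, hx⟩ := x
  congr 1
  · rcases x with _ | k
    · simp [h0]
    · simp only [Nat.add_right_cancel_iff, Finset.sum_ite_eq', Finset.mem_range]
      rw [if_pos (by omega)]
  · split_ifs with h
    · rfl
    · rw [show x + 2 = l + 1 by simp at h; omega, hlast]

/-- Columns are indexed by `Icc 1 l` so that matrix products produce the sums
`∑ n ∈ Icc 1 l` of the statement. -/
noncomputable def sinMat (l : ℕ) : Matrix (Fin l) (Icc 1 l) ℝ :=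
  of fun x n => sin (π * (n : ℕ) * ((x : ℕ) + 1) / (l + 1))

theorem sinMat_mul_transpose (l : ℕ) :
    sinMat l * (sinMat l)ᵀ = (((l : ℝ) + 1) / 2) • 1 := by
  ext x y
  have h := sum_sin_mul_sin_pi_div_succ l (x + 1) (y + 1) (mem_Icc.2 ⟨by omega, x.2⟩)
    (mem_Icc.2 ⟨by omega, y.2⟩)
  push_cast at h
  rw [← Finset.sum_coe_sort (Icc 1 l)] at h
  simp only [sinMat, mul_apply, transpose_apply, of_apply, h, Matrix.smul_apply, one_apply,
    Fin.ext_iff, smul_eq_mul]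
  split_ifs <;> simp

theorem lapMat_mul_sinMat (l : ℕ) :
    lapMat l * sinMat l =
      sinMat l * diagonal (fun n : Icc 1 l => 2 * cos (π * (n : ℕ) / (l + 1))) := by
  ext x ⟨n, hn⟩
  set w : ℕ → ℝ := fun m => sin (π * n * m / (l + 1))
  have hw (m : ℕ) : w m + w (m + 2) = w (m + 1) * (2 * cos (π * n / (l + 1))) := by
    simp only [w]
    rw [show π * n * ((m + 2 : ℕ) : ℝ) / (l + 1) =
          π * n * ((m + 1 : ℕ) : ℝ) / (l + 1) + π * n / (l + 1) by push_cast; ring,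
      show π * n * (m : ℝ) / (l + 1) =
          π * n * ((m + 1 : ℕ) : ℝ) / (l + 1) - π * n / (l + 1) by push_cast; ring,
      sin_add, sin_sub]
    ring
  have hlast : w (l + 1) = 0 := by
    simp only [w]
    rw [show π * n * ((l + 1 : ℕ) : ℝ) / (l + 1) = (n : ℤ) * π by push_cast; field_simp,
      sin_int_mul_pi]
  have hcol : (fun y => sinMat l y ⟨n, hn⟩) = fun y : Fin l => w ((y : ℕ) + 1) := by
    ext y; simp [sinMat, w]
  rw [mul_apply, mul_diagonal]
  calc ∑ y, lapMat l x y * sinMat l y ⟨n, hn⟩ = (lapMat l *ᵥ fun y => sinMat l y ⟨n, hn⟩) x := rfl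
    _ = w x + w (x + 2) := by rw [hcol, lapMat_mulVec_shift l w (by simp [w]) hlast]
    _ = _ := by rw [hw]; simp [sinMat, w]

noncomputable def lapResolvent (l : ℕ) (r : ℝ) (z : ℂ) : Matrix (Fin l) (Fin l) ℂ :=
  (2 / ((l : ℂ) + 1)) • ((sinMat l).map Complex.ofReal *
    diagonal (fun n : Icc 1 l => ((((2 * r ^ 2 * cos (π * (n : ℕ) / (l + 1)) : ℝ) : ℂ) - z)⁻¹)) *
    ((sinMat l).map Complex.ofReal)ᵀ)

theorem lapResolvent_apply (l : ℕ) (r : ℝ) (z : ℂ) (x y : Fin l) :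
    lapResolvent l r z x y = 2 / ((l : ℂ) + 1) * ∑ n ∈ Icc 1 l,
      ((sin (π * n * ((x : ℕ) + 1) / (l + 1)) * sin (π * n * ((y : ℕ) + 1) / (l + 1)) : ℝ) : ℂ) /
        (((2 * r ^ 2 * cos (π * n / (l + 1)) : ℝ) : ℂ) - z) := by
  rw [lapResolvent, Matrix.smul_apply, mul_apply, ← Finset.sum_coe_sort (Icc 1 l)]
  simp only [mul_diagonal, transpose_apply, map_apply, sinMat, of_apply, smul_eq_mul]
  push_cast
  congr 1
  refine Finset.sum_congr rfl fun n _ => ?_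
  ring

theorem mul_lapResolvent (l : ℕ) (r : ℝ) (z : ℂ)
    (hz : ∀ n ∈ Icc 1 l, z ≠ ((2 * r ^ 2 * cos (π * n / (l + 1)) : ℝ) : ℂ)) :
    ((r ^ 2 • lapMat l).map Complex.ofReal - z • 1) * lapResolvent l r z = 1 := by
  set A := (r ^ 2 • lapMat l).map Complex.ofRealHom
  set S := (sinMat l).map Complex.ofRealHom
  set e : Icc 1 l → ℂ := fun n => ((2 * r ^ 2 * cos (π * (n : ℕ) / (l + 1)) : ℝ) : ℂ)
  have hS : (A - z • 1) * S = S * (diagonal e - z • 1) := by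
    have hAS : A * S = S * diagonal e := by
      rw [← Matrix.map_mul, smul_mul, lapMat_mul_sinMat, ← Matrix.mul_smul, ← diagonal_smul,
        Matrix.map_mul]
      congr
      ext n
      simp only [e, map_apply, diagonal_apply]
      split_ifs
      · simp only [Pi.smul_apply, smul_eq_mul, Complex.ofRealHom_eq_coe]; push_cast; ring
      · exact map_zero _
    rw [Matrix.sub_mul, hAS, Matrix.mul_sub, smul_mul, Matrix.one_mul, Matrix.mul_smul,
      Matrix.mul_one]
  have hdiag : (diagonal e - z • 1) * diagonal (fun n => (e n - z)⁻¹) = 1 := by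
    rw [smul_one_eq_diagonal, diagonal_sub, diagonal_mul_diagonal, ← diagonal_one]
    congr 1
    ext n
    exact mul_inv_cancel₀ (sub_ne_zero.2 (hz n n.2).symm)
  have hSS : S * Sᵀ = (((l : ℂ) + 1) / 2) • 1 := by
    rw [← transpose_map, ← Matrix.map_mul, sinMat_mul_transpose]
    ext x y
    simp only [map_apply, Matrix.smul_apply, one_apply, smul_eq_mul]
    split_ifs <;> simp
  have hl : (l : ℂ) + 1 ≠ 0 := by exact_mod_cast Nat.succ_ne_zero l
  calc (A - z • 1) * lapResolvent l r z
      = (2 / ((l : ℂ) + 1)) • ((A - z • 1) * S * diagonal (fun n => (e n - z)⁻¹) * Sᵀ) := by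
        rw [lapResolvent, Matrix.mul_smul, Matrix.mul_assoc, Matrix.mul_assoc, Matrix.mul_assoc]
        rfl
    _ = (2 / ((l : ℂ) + 1)) • (S * Sᵀ) := by
        rw [hS, Matrix.mul_assoc S, hdiag, Matrix.mul_one]
    _ = 1 := by
        rw [hSS, smul_smul, div_mul_div_comm, mul_comm 2, div_self (mul_ne_zero hl two_ne_zero),
          one_smul]

/-- The indices `1` and `l` of the statement. -/
def corners {l : ℕ} (hl : 0 < l) : Fin 2 → Fin l :=
  ![⟨0, hl⟩, ⟨l - 1, Nat.sub_one_lt_of_lt hl⟩]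

theorem Dmat_map_sub_smul_one {l : ℕ} (hl : 0 < l) (a b r : ℝ) (z : ℂ) :
    (Dmat l a b r).map Complex.ofReal - z • 1 =
      ((r ^ 2 • lapMat l).map Complex.ofReal - z • 1) +
        (1 : Matrix (Fin l) (Fin l) ℂ).submatrix id (corners hl) *
          (diagonal ![(a : ℂ) + r, (b : ℂ) + r] *
            (1 : Matrix (Fin l) (Fin l) ℂ).submatrix (corners hl) id) := by
  ext x y
  simp only [Matrix.add_apply, mul_apply, submatrix_apply, Fin.sum_univ_two]
  simp [Dmat, one_apply, corners, Fin.ext_iff]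
  split_ifs <;> first | omega | (push_cast; ring)

theorem lapResolvent_submatrix_corners_apply (l : ℕ) (hl : 0 < l) (r : ℝ) (z : ℂ)
    (i j : Fin 2) :
    (lapResolvent l r z).submatrix (corners hl) (corners hl) i j = 2 / ((l : ℂ) + 1) *
      ∑ n ∈ Icc 1 l, ((![sin (π * n / (l + 1)), sin (π * n * l / (l + 1))] i *
        ![sin (π * n / (l + 1)), sin (π * n * l / (l + 1))] j : ℝ) : ℂ) /
          (((2 * r ^ 2 * cos (π * n / (l + 1)) : ℝ) : ℂ) - z) := by
  have hlast : ((l - 1 : ℕ) : ℝ) + 1 = l := by rw [Nat.cast_pred hl, sub_add_cancel]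
  have hsin (k : Fin 2) (n : ℕ) : sin (π * n * ((corners hl k : ℕ) + 1) / (l + 1)) =
      ![sin (π * n / (l + 1)), sin (π * n * l / (l + 1))] k := by
    fin_cases k <;> simp [corners, hlast]
  simp only [submatrix_apply, lapResolvent_apply, hsin]

theorem stmt_12 (l : ℕ) (hl : 2 ≤ l) (a b r : ℝ) (z : ℂ)
    (hz : ∀ n ∈ Finset.Icc 1 l, z ≠ ((2*r^2*Real.cos (π*n/(l+1)) : ℝ) : ℂ)) :
    let G11 : ℂ := (2/((l : ℂ)+1)) * ∑ n ∈ Finset.Icc 1 l,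
      ((Real.sin (π*n/(l+1))^2 : ℝ) : ℂ)
        / (((2*r^2*Real.cos (π*n/(l+1)) : ℝ) : ℂ) - z)
    let G1l : ℂ := (2/((l : ℂ)+1)) * ∑ n ∈ Finset.Icc 1 l,
      ((Real.sin (π*n/(l+1)) * Real.sin (π*n*l/(l+1)) : ℝ) : ℂ)
        / (((2*r^2*Real.cos (π*n/(l+1)) : ℝ) : ℂ) - z)
    (z ∈ spectrum ℂ ((Dmat l a b r).map Complex.ofReal) ↔
      1 + ((a : ℂ) + (b : ℂ) + 2*(r : ℂ)) * G11
        + ((a : ℂ) + (r : ℂ)) * ((b : ℂ) + (r : ℂ)) * (G11^2 - G1l^2) = 0) := by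
  intro G11 G1l
  have hl0 : 0 < l := by omega
  have hM := mul_lapResolvent l r z hz
  have hcorner : (lapResolvent l r z).submatrix (corners hl0) (corners hl0) =
      !![G11, G1l; G1l, G11] := by
    ext i j
    rw [lapResolvent_submatrix_corners_apply]
    fin_cases i <;> fin_cases j <;>
      simp only [Fin.zero_eta, Fin.mk_one, cons_val_zero, cons_val_one, of_apply, ← sq,
        sin_sq_reflect_pi_mul_div_succ, mul_comm (sin (π * _ * l / _))] <;> rfl
  rw [mem_spectrum_iff_det_sub_smul_one_eq_zero, Dmat_map_sub_smul_one hl0,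
    det_add_mul _ _ (isUnit_det_of_right_inverse hM), inv_eq_right_inv hM,
    Matrix.mul_assoc (diagonal _), Matrix.mul_assoc (diagonal _),
    one_submatrix_mul_mul_one_submatrix, hcorner, mul_eq_zero,
    or_iff_right (det_ne_zero_of_right_inverse hM), det_fin_two]
  simp [G11, G1l]
  constructor <;> intro h <;> linear_combination h
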